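/- arXiv:1407.4869 — 4 statements merged into one kernel-verified Lean document; each statement's English description precedes it below -/
import Mathlib

section
/- Let G be a finite simple graph that is not bipartite. Then every weak IASI f of G has at least one mono-indexed edge, i.e., there exists an edge uv of G with |f(u)| = |f(v)| = 1. -/
open Finset SimpleGraph
open scoped Pointwise

/-- `f` is a weak integer additive set-indexer (weak IASI) of the simple graph `G`:
an injective assignment of nonempty finite sets of non-negative integers to vertices
whose induced sumset-labeling of edges is injective, and such that the set-indexing
number of every edge equals the maximum of those of its end vertices. -/
structure IsWeakIASI {V : Type*} (G : SimpleGraph V) (f : V → Finset ℕ) : Prop where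
  nonempty : ∀ v : V, (f v).Nonempty
  injective : Function.Injective f
  edgeInjective : ∀ ⦃u v x y : V⦄, G.Adj u v → G.Adj x y →
    f u + f v = f x + f y → s(u, v) = s(x, y)
  weak : ∀ ⦃u v : V⦄, G.Adj u v → (f u + f v).card = max (f u).card (f v).card

open scoped Classical in
/-- The number of mono-indexed edges of `G` under the vertex labeling `f`, i.e. the
number of edges both of whose end vertices receive singleton set-labels. -/
noncomputable def monoEdgeCount {V : Type*} [Fintype V] (G : SimpleGraph V)
    (f : V → Finset ℕ) : ℕ :=
  (G.edgeFinset.filter fun e => ∀ v ∈ e, (f v).card = 1).card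

/-- The set of numbers of mono-indexed edges over all weak IASIs of `G`; the sparing
number of `G` is the least element of this set. -/
noncomputable def monoCounts {V : Type*} [Fintype V] (G : SimpleGraph V) : Set ℕ :=
  {k : ℕ | ∃ f : V → Finset ℕ, IsWeakIASI G f ∧ monoEdgeCount G f = k}

/-- A simple graph is bipartite if its vertices split into two parts such that every
edge has one end in each part. -/
def IsBipartite {V : Type*} (G : SimpleGraph V) : Prop :=
  ∃ A : Set V, ∀ ⦃u v : V⦄, G.Adj u v → (u ∈ A ↔ v ∉ A)

theorem Finset.card_eq_one_or_card_eq_one_of_card_add_eq_max {α : Type*} [LinearOrder α]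
    [Add α] [IsCancelAdd α] [AddLeftMono α] [AddRightMono α] {s t : Finset α}
    (hs : s.Nonempty) (ht : t.Nonempty) (h : #(s + t) = max #s #t) : #s = 1 ∨ #t = 1 := by
  have hcd := cauchy_davenport_add_of_linearOrder_isCancelAdd hs ht
  have hs1 := hs.card_pos
  have ht1 := ht.card_pos
  omega

theorem IsWeakIASI.card_eq_one_or_card_eq_one {V : Type*} {G : SimpleGraph V}
    {f : V → Finset ℕ} (hf : IsWeakIASI G f) {u v : V} (huv : G.Adj u v) :
    (f u).card = 1 ∨ (f v).card = 1 :=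
  card_eq_one_or_card_eq_one_of_card_add_eq_max (hf.nonempty u) (hf.nonempty v) (hf.weak huv)

theorem exists_monoIndexed_edge_of_not_bipartite_general {V : Type*}
    (G : SimpleGraph V) (hG : ¬ _root_.IsBipartite G)
    (f : V → Finset ℕ) (hf : IsWeakIASI G f) :
    ∃ u v : V, G.Adj u v ∧ (f u).card = 1 ∧ (f v).card = 1 := by
  by_contra! hnone
  refine hG ⟨{v | (f v).card = 1}, fun u v huv => ?_⟩
  have hsingleton := hf.card_eq_one_or_card_eq_one huv
  have hnot_both := hnone u v huv
  simp only [Set.mem_ofPred_eq]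
  tauto

/-- If a finite simple graph `G` is not bipartite, then every weak IASI
of `G` has at least one mono-indexed edge. -/
theorem exists_monoIndexed_edge_of_not_bipartite {V : Type*} [Fintype V]
    (G : SimpleGraph V) (hG : ¬ _root_.IsBipartite G)
    (f : V → Finset ℕ) (hf : IsWeakIASI G f) :
    ∃ u v : V, G.Adj u v ∧ (f u).card = 1 ∧ (f v).card = 1 :=
  exists_monoIndexed_edge_of_not_bipartite_general G hG f hf
end

section
/- Every finite bipartite simple graph G admits a weak IASI with no mono-indexed edges; equivalently, the sparing number of a bipartite graph is 0. -/
open Finset SimpleGraph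
open scoped Pointwise

/-! Number the vertices by an injection `i` into `Fin n`, put the vertices of one side `A`
of the bipartition on singletons `{i v}` and those of the other side on pairs
`{n * i v, n * i v + 1}`. Every edge then has exactly one singleton end, so it is not
mono-indexed and its sumset `{i u + n * i v, i u + n * i v + 1}` has the weak size `2`; the
base-`n` digits of `i u + n * i v` recover the edge. -/

lemma pair_succ_injective : Function.Injective fun x : ℕ => ({x, x + 1} : Finset ℕ) := by
  intro x y h
  have hx : x ∈ ({y, y + 1} : Finset ℕ) := (congrArg (x ∈ ·) h).mp (mem_insert_self x _)
  have hy : y ∈ ({x, x + 1} : Finset ℕ) := (congrArg (y ∈ ·) h).mpr (mem_insert_self y _)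
  simp only [mem_insert, mem_singleton] at hx hy
  omega

lemma card_pair_succ (x : ℕ) : #({x, x + 1} : Finset ℕ) = 2 :=
  card_pair x.succ_ne_self.symm

lemma card_add_eq_max_of_card_eq_one {α : Type*} [DecidableEq α] [Add α] [IsLeftCancelAdd α]
    {s t : Finset α} (hs : #s = 1) (ht : t.Nonempty) : #(s + t) = max #s #t := by
  obtain ⟨a, rfl⟩ := card_eq_one.mp hs
  rw [card_singleton_add, card_singleton, max_eq_right (one_le_card.mpr ht)]

lemma apply_eq_apply_of_sym2_eq {α β : Type*} {g : α → α → β} (hg : ∀ a b, g a b = g b a)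
    ⦃u v x y : α⦄ (h : s(u, v) = s(x, y)) : g u v = g x y := by
  simpa only [Sym2.lift_mk] using congrArg (Sym2.lift ⟨g, hg⟩) h

def bipartiteLabel {V : Type*} {n : ℕ} (A : Set V) [DecidablePred (· ∈ A)] (i : V → Fin n)
    (v : V) : Finset ℕ :=
  if v ∈ A then {(i v : ℕ)} else {n * i v, n * i v + 1}

section BipartiteLabel

variable {V : Type*} {n : ℕ} {G : SimpleGraph V} {A : Set V} [DecidablePred (· ∈ A)]
  {i : V → Fin n}

lemma bipartiteLabel_of_mem {v : V} (hv : v ∈ A) : bipartiteLabel A i v = {(i v : ℕ)} :=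
  if_pos hv

lemma bipartiteLabel_of_notMem {v : V} (hv : v ∉ A) :
    bipartiteLabel A i v = {n * i v, n * i v + 1} :=
  if_neg hv

lemma card_bipartiteLabel_of_mem {v : V} (hv : v ∈ A) : #(bipartiteLabel A i v) = 1 := by
  rw [bipartiteLabel_of_mem hv, card_singleton]

lemma card_bipartiteLabel_of_notMem {v : V} (hv : v ∉ A) : #(bipartiteLabel A i v) = 2 := by
  rw [bipartiteLabel_of_notMem hv, card_pair_succ]

lemma bipartiteLabel_nonempty (v : V) : (bipartiteLabel A i v).Nonempty := by
  unfold bipartiteLabel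
  split_ifs <;> simp

lemma bipartiteLabel_injective (hi : Function.Injective i) :
    Function.Injective (bipartiteLabel A i) := by
  intro u v h
  have hcard := congrArg Finset.card h
  by_cases hu : u ∈ A <;> by_cases hv : v ∈ A
  · rw [bipartiteLabel_of_mem hu, bipartiteLabel_of_mem hv, singleton_inj] at h
    exact hi (Fin.ext h)
  · rw [card_bipartiteLabel_of_mem hu, card_bipartiteLabel_of_notMem hv] at hcard
    omega
  · rw [card_bipartiteLabel_of_notMem hu, card_bipartiteLabel_of_mem hv] at hcard
    omega
  · rw [bipartiteLabel_of_notMem hu, bipartiteLabel_of_notMem hv] at h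
    have hpos : 0 < n := (i u).pos
    exact hi (Fin.ext (Nat.eq_of_mul_eq_mul_left hpos (pair_succ_injective h)))

lemma bipartiteLabel_add {u v : V} (hu : u ∈ A) (hv : v ∉ A) :
    bipartiteLabel A i u + bipartiteLabel A i v =
      {(i u : ℕ) + n * i v, (i u : ℕ) + n * i v + 1} := by
  rw [bipartiteLabel_of_mem hu, bipartiteLabel_of_notMem hv, singleton_add,
    vadd_finset_insert, vadd_finset_singleton]
  simp only [vadd_eq_add, add_assoc]

lemma eq_and_eq_of_bipartiteLabel_add_eq (hi : Function.Injective i) {u v x y : V}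
    (hu : u ∈ A) (hv : v ∉ A) (hx : x ∈ A) (hy : y ∉ A)
    (h : bipartiteLabel A i u + bipartiteLabel A i v =
      bipartiteLabel A i x + bipartiteLabel A i y) : u = x ∧ v = y := by
  rw [bipartiteLabel_add hu hv, bipartiteLabel_add hx hy] at h
  have hdigits := finProdFinEquiv.injective (a₁ := (i v, i u)) (a₂ := (i y, i x))
    (Fin.ext (pair_succ_injective h))
  rw [Prod.mk.injEq] at hdigits
  exact ⟨hi hdigits.2, hi hdigits.1⟩

lemma exists_eq_mk_of_adj (hA : ∀ ⦃u v : V⦄, G.Adj u v → (u ∈ A ↔ v ∉ A)) {u v : V}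
    (h : G.Adj u v) : ∃ p ∈ A, ∃ q ∉ A, s(u, v) = s(p, q) := by
  by_cases hu : u ∈ A
  · exact ⟨u, hu, v, (hA h).mp hu, rfl⟩
  · exact ⟨v, not_not.mp (mt (hA h).mpr hu), u, hu, Sym2.eq_swap⟩

theorem isWeakIASI_bipartiteLabel (hA : ∀ ⦃u v : V⦄, G.Adj u v → (u ∈ A ↔ v ∉ A))
    (hi : Function.Injective i) : IsWeakIASI G (bipartiteLabel A i) where
  nonempty := bipartiteLabel_nonempty
  injective := bipartiteLabel_injective hi
  edgeInjective u v x y huv hxy h := by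
    have hsum := apply_eq_apply_of_sym2_eq fun a b => add_comm (bipartiteLabel A i a) _
    obtain ⟨p, hp, q, hq, hpq⟩ := exists_eq_mk_of_adj hA huv
    obtain ⟨p', hp', q', hq', hpq'⟩ := exists_eq_mk_of_adj hA hxy
    rw [hsum hpq, hsum hpq'] at h
    obtain ⟨rfl, rfl⟩ := eq_and_eq_of_bipartiteLabel_add_eq hi hp hq hp' hq' h
    rw [hpq, hpq']
  weak u v huv := by
    by_cases hu : u ∈ A
    · exact card_add_eq_max_of_card_eq_one (card_bipartiteLabel_of_mem hu)
        (bipartiteLabel_nonempty v)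
    · rw [add_comm, max_comm]
      have hv : v ∈ A := not_not.mp (mt (hA huv).mpr hu)
      exact card_add_eq_max_of_card_eq_one (card_bipartiteLabel_of_mem hv)
        (bipartiteLabel_nonempty u)

lemma monoEdgeCount_bipartiteLabel [Fintype V]
    (hA : ∀ ⦃u v : V⦄, G.Adj u v → (u ∈ A ↔ v ∉ A)) :
    monoEdgeCount G (bipartiteLabel A i) = 0 := by
  classical
  rw [monoEdgeCount, card_eq_zero, filter_eq_empty_iff]
  intro e he hmono
  induction e using Sym2.ind with
  | _ u v =>
    obtain ⟨p, -, q, hq, hpq⟩ := exists_eq_mk_of_adj hA (mem_edgeFinset.mp he)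
    have hq1 := hmono q (hpq ▸ Sym2.mem_mk_right p q)
    rw [card_bipartiteLabel_of_notMem hq] at hq1
    exact absurd hq1 (by decide)

end BipartiteLabel

/-- Every finite bipartite simple graph admits a weak IASI with no
mono-indexed edges; equivalently, the sparing number of a bipartite graph is `0`. -/
theorem sparing_number_of_bipartite {V : Type*} [Fintype V]
    (G : SimpleGraph V) (hG : _root_.IsBipartite G) :
    (∃ f : V → Finset ℕ, IsWeakIASI G f ∧ monoEdgeCount G f = 0) ∧
      IsLeast (monoCounts G) 0 := by
  classical
  obtain ⟨A, hA⟩ := hG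
  have hf : IsWeakIASI G (bipartiteLabel A (Fintype.equivFin V)) :=
    isWeakIASI_bipartiteLabel hA (Fintype.equivFin V).injective
  have hmono := monoEdgeCount_bipartiteLabel (i := Fintype.equivFin V) hA
  exact ⟨⟨_, hf, hmono⟩, ⟨_, hf, hmono⟩, fun k _ => k.zero_le⟩
end

section
/- For all positive integers m and n, the sparing number of the planar grid P_m × P_n (the cartesian product of the paths P_m and P_n) is 0. -/
open Finset SimpleGraph
open scoped Pointwise

/-!
The grid is bipartite. Label one colour class by doubletons `{t, 2t}` and the other by
singletons `{t}`, with `t` running injectively through the positive integers. Every edge then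
joins a doubleton `{a, 2a}` to a singleton `{b}`, so no edge is mono-indexed, the edge sumset
`{a + b, 2a + b}` has two elements, and it determines `a` (the difference of its elements)
and then `b`, hence the edge.
-/

namespace SimpleGraph.Coloring

variable {α β : Type*} {G : SimpleGraph α} {H : SimpleGraph β}

def boxProdXor (c₁ : G.Coloring Bool) (c₂ : H.Coloring Bool) : (G □ H).Coloring Bool :=
  Coloring.mk (fun v => xor (c₁ v.1) (c₂ v.2)) <| by
    rintro u v (⟨hadj, heq⟩ | ⟨hadj, heq⟩)
    · simpa [heq] using c₁.valid hadj
    · simpa [heq] using c₂.valid hadj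

end SimpleGraph.Coloring

lemma doubleton_add_singleton (a b : ℕ) :
    ({a, 2 * a} : Finset ℕ) + {b} = {a + b, 2 * a + b} := by
  ext x
  simp [mem_add, eq_comm]

lemma eq_and_eq_of_doubleton_sum_eq {a b a' b' : ℕ} (ha : 0 < a) (ha' : 0 < a')
    (h : ({a + b, 2 * a + b} : Finset ℕ) = {a' + b', 2 * a' + b'}) : a = a' ∧ b = b' := by
  have h₁ : a + b ∈ ({a' + b', 2 * a' + b'} : Finset ℕ) := h ▸ by simp
  have h₂ : 2 * a + b ∈ ({a' + b', 2 * a' + b'} : Finset ℕ) := h ▸ by simp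
  have h₃ : a' + b' ∈ ({a + b, 2 * a + b} : Finset ℕ) := h ▸ by simp
  simp only [mem_insert, mem_singleton] at h₁ h₂ h₃
  omega

section DoubletonLabel

variable {V : Type*} {G : SimpleGraph V} (c : G.Coloring Bool) {t : V → ℕ}

def doubletonLabel (t : V → ℕ) (v : V) : Finset ℕ :=
  if c v then {t v, 2 * t v} else {t v}

variable {c}

lemma doubletonLabel_of_true {v : V} (hv : c v = true) :
    doubletonLabel c t v = {t v, 2 * t v} := by
  simp [doubletonLabel, hv]

lemma doubletonLabel_of_false {v : V} (hv : c v = false) :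
    doubletonLabel c t v = {t v} := by
  simp [doubletonLabel, hv]

lemma card_doubletonLabel_of_true (ht : ∀ v, 0 < t v) {v : V} (hv : c v = true) :
    (doubletonLabel c t v).card = 2 := by
  rw [doubletonLabel_of_true hv, card_pair]
  have := ht v
  omega

lemma self_mem_doubletonLabel (v : V) : t v ∈ doubletonLabel c t v := by
  unfold doubletonLabel
  split <;> simp

lemma doubletonLabel_nonempty (v : V) : (doubletonLabel c t v).Nonempty :=
  ⟨t v, self_mem_doubletonLabel v⟩

lemma doubletonLabel_subset (v : V) : doubletonLabel c t v ⊆ {t v, 2 * t v} := by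
  unfold doubletonLabel
  split <;> simp

lemma doubletonLabel_injective (ht : ∀ v, 0 < t v) (ht_inj : Function.Injective t) :
    Function.Injective (doubletonLabel c t) := by
  intro u v h
  have hu : t u ∈ ({t v, 2 * t v} : Finset ℕ) :=
    doubletonLabel_subset v (h ▸ self_mem_doubletonLabel u)
  have hv : t v ∈ ({t u, 2 * t u} : Finset ℕ) :=
    doubletonLabel_subset u (h ▸ self_mem_doubletonLabel v)
  simp only [mem_insert, mem_singleton] at hu hv
  have := ht u
  exact ht_inj (by omega)

lemma exists_orientation_add_doubletonLabel {u v : V} (huv : G.Adj u v) :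
    ∃ x y, c x = true ∧ c y = false ∧ s(u, v) = s(x, y) ∧
      doubletonLabel c t u + doubletonLabel c t v = {t x + t y, 2 * t x + t y} := by
  have hne := c.valid huv
  cases hu : c u
  · have hv : c v = true := by simpa [hu] using hne.symm
    refine ⟨v, u, hv, hu, Sym2.eq_swap, ?_⟩
    rw [add_comm, doubletonLabel_of_true hv, doubletonLabel_of_false hu,
      doubleton_add_singleton]
  · have hv : c v = false := by simpa [hu] using hne.symm
    refine ⟨u, v, hu, hv, rfl, ?_⟩
    rw [doubletonLabel_of_true hu, doubletonLabel_of_false hv, doubleton_add_singleton]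

lemma isWeakIASI_doubletonLabel (ht : ∀ v, 0 < t v) (ht_inj : Function.Injective t) :
    IsWeakIASI G (doubletonLabel c t) where
  nonempty := doubletonLabel_nonempty
  injective := doubletonLabel_injective ht ht_inj
  edgeInjective u v x y huv hxy h := by
    obtain ⟨a, b, -, -, hab, hsum⟩ := exists_orientation_add_doubletonLabel (t := t) huv
    obtain ⟨a', b', -, -, hab', hsum'⟩ := exists_orientation_add_doubletonLabel (t := t) hxy
    rw [hsum, hsum'] at h
    obtain ⟨h₁, h₂⟩ := eq_and_eq_of_doubleton_sum_eq (ht a) (ht a') h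
    rw [hab, hab', ht_inj h₁, ht_inj h₂]
  weak u v huv := by
    obtain ⟨x, y, hx, hy, hxy, hsum⟩ := exists_orientation_add_doubletonLabel (t := t) huv
    have hcard : (doubletonLabel c t x).card = 2 := card_doubletonLabel_of_true ht hx
    have hcard' : (doubletonLabel c t y).card = 1 := by rw [doubletonLabel_of_false hy]; rfl
    rw [hsum, card_pair (by have := ht x; omega)]
    rcases Sym2.eq_iff.mp hxy with ⟨rfl, rfl⟩ | ⟨rfl, rfl⟩ <;> simp [hcard, hcard']

lemma monoEdgeCount_doubletonLabel [Fintype V] (ht : ∀ v, 0 < t v) :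
    monoEdgeCount G (doubletonLabel c t) = 0 := by
  classical
  refine card_eq_zero.mpr (filter_eq_empty_iff.mpr fun e he hmono => ?_)
  induction e using Sym2.ind with
  | _ u v =>
    obtain ⟨x, y, hx, -, hxy, -⟩ :=
      exists_orientation_add_doubletonLabel (c := c) (t := t) (G.mem_edgeFinset.mp he)
    have := hmono x (hxy ▸ Sym2.mem_mk_left x y)
    simp [card_doubletonLabel_of_true ht hx] at this

end DoubletonLabel

theorem isLeast_monoCounts_of_coloring {V : Type*} [Fintype V] {G : SimpleGraph V}
    (c : G.Coloring Bool) : IsLeast (monoCounts G) 0 := by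
  obtain ⟨e, he⟩ := Countable.exists_injective_nat V
  have ht : ∀ v, 0 < e v + 1 := fun _ => Nat.succ_pos _
  have ht_inj : Function.Injective (e · + 1) := fun _ _ h => he (Nat.succ_injective h)
  exact ⟨⟨doubletonLabel c (e · + 1), isWeakIASI_doubletonLabel ht ht_inj,
    monoEdgeCount_doubletonLabel ht⟩, fun k _ => k.zero_le⟩

theorem sparing_number_grid_general (m n : ℕ) :
    IsLeast (monoCounts (pathGraph (m + 1) □ pathGraph (n + 1))) 0 :=
  isLeast_monoCounts_of_coloring
    ((pathGraph.bicoloring _).boxProdXor (pathGraph.bicoloring _))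

/-- For positive integers `m`, `n`, the sparing number of the planar grid
`Pₘ □ Pₙ` is `0` (where `Pₘ`, the path of length `m`, has `m + 1` vertices). -/
theorem sparing_number_grid (m n : ℕ) (hm : 0 < m) (hn : 0 < n) :
    IsLeast (monoCounts (pathGraph (m + 1) □ pathGraph (n + 1))) 0 :=
  sparing_number_grid_general m n
end

section
/- Let m ≥ 3 and n ≥ 1. The sparing number of the prism C_m × P_n (the cartesian product of the cycle C_m and the path P_n) is 0 if m is even, and 2n+1 if m is odd. -/
open Finset SimpleGraph
open scoped Pointwise

/-!
By Cauchy–Davenport, `|A + B| ≥ |A| + |B| - 1`, so a weak IASI never gives both ends of an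
edge non-singleton labels: the vertices with non-singleton labels form an independent set `S`,
and the mono-indexed edges are the edges that miss `S`. Conversely every independent set `S`
arises this way, from the labels `{2 ^ c v}` off `S` and `{2 ^ c v, 2 ^ c v + 1}` on `S` for an
injective `c` (edge labels are then injective because `2 ^ a + 2 ^ b` determines `{a, b}`).
So the sparing number is the least number of edges missed by an independent set.

For even `m`, one colour class of the checkerboard colouring of the prism meets every edge.
For odd `m`, an independent set of `C_m` has fewer than `m / 2` vertices, so it misses an edge
of every copy of `C_m`, and, as the two ends of a rung are never both in `S`, also a rung
between any two consecutive copies: at least `2n + 1` edges. The same colour class with its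
last column removed misses exactly that many.
-/

theorem IsWeakIASI.isIndepSet_setOf_card_ne_one {V : Type*} {G : SimpleGraph V}
    {f : V → Finset ℕ} (hf : IsWeakIASI G f) : G.IsIndepSet {v | (f v).card ≠ 1} := by
  intro u hu v hv _ huv
  have hsum := cauchy_davenport_add_of_linearOrder_isCancelAdd (hf.nonempty u) (hf.nonempty v)
  have hu₀ := (hf.nonempty u).card_pos
  have hv₀ := (hf.nonempty v).card_pos
  rw [hf.weak huv] at hsum
  simp only [Set.mem_ofPred_eq] at hu hv
  omega

theorem eq_of_singleton_add_eq_singleton_add {x y : ℕ} {P Q : Finset ℕ} (hP : 0 ∈ P)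
    (hQ : 0 ∈ Q) (h : {x} + P = {y} + Q) : x = y := by
  have le_of_mem {a b : ℕ} {R : Finset ℕ} (hb : b ∈ {a} + R) : a ≤ b := by
    obtain ⟨a', ha', c, -, rfl⟩ := Finset.mem_add.1 hb
    rw [Finset.mem_singleton.1 ha']
    omega
  have hx : x ∈ {y} + Q := h ▸ Finset.add_mem_add (Finset.mem_singleton_self x) hP
  have hy : y ∈ {x} + P := h ▸ Finset.add_mem_add (Finset.mem_singleton_self y) hQ
  exact le_antisymm (le_of_mem hy) (le_of_mem hx)

theorem sym2_eq_of_two_pow_add_two_pow_eq {a b c d : ℕ} (hab : a ≠ b) (hcd : c ≠ d)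
    (h : 2 ^ a + 2 ^ b = 2 ^ c + 2 ^ d) : s(a, b) = s(c, d) := by
  have hpair : ({a, b} : Finset ℕ) = {c, d} := Finset.geomSum_injective le_rfl <| by
    simp only [Finset.sum_pair hab, Finset.sum_pair hcd, h]
  rw [Finset.ext_iff] at hpair
  have ha := hpair a; have hb := hpair b; have hc := hpair c; have hd := hpair d
  simp only [Finset.mem_insert, Finset.mem_singleton, true_or, or_true, iff_true, true_iff]
    at ha hb hc hd
  rw [Sym2.eq_iff]
  omega

section Label

variable {V : Type*} (S : Set V) (c : V → ℕ)

open scoped Classical in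
noncomputable def indepOffsets (v : V) : Finset ℕ := if v ∈ S then {0, 1} else 0

noncomputable def indepLabel (v : V) : Finset ℕ := {2 ^ c v} + indepOffsets S v

variable {S c}

theorem zero_mem_indepOffsets (v : V) : 0 ∈ indepOffsets S v := by
  unfold indepOffsets; split_ifs <;> simp

theorem indepOffsets_of_notMem {v : V} (h : v ∉ S) : indepOffsets S v = 0 := by
  simp [indepOffsets, h]

theorem card_indepLabel_eq_one_iff {v : V} : (indepLabel S c v).card = 1 ↔ v ∉ S := by
  by_cases h : v ∈ S <;> simp [indepLabel, indepOffsets, Finset.card_singleton_add, h]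

theorem indepLabel_add_indepLabel (u v : V) : indepLabel S c u + indepLabel S c v =
    {2 ^ c u + 2 ^ c v} + (indepOffsets S u + indepOffsets S v) := by
  rw [indepLabel, indepLabel, add_add_add_comm, Finset.singleton_add_singleton]

theorem isWeakIASI_indepLabel {G : SimpleGraph V} (hS : G.IsIndepSet S)
    (hc : Function.Injective c) : IsWeakIASI G (indepLabel S c) where
  nonempty v := Finset.Nonempty.add (Finset.singleton_nonempty _) ⟨0, zero_mem_indepOffsets v⟩
  injective u v h := hc <| Nat.pow_right_injective le_rfl <|
    eq_of_singleton_add_eq_singleton_add (zero_mem_indepOffsets u) (zero_mem_indepOffsets v) h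
  edgeInjective u v x y huv hxy h := by
    rw [indepLabel_add_indepLabel, indepLabel_add_indepLabel] at h
    have hsum := eq_of_singleton_add_eq_singleton_add
      (Finset.add_mem_add (zero_mem_indepOffsets u) (zero_mem_indepOffsets v))
      (Finset.add_mem_add (zero_mem_indepOffsets x) (zero_mem_indepOffsets y)) h
    have hcode := sym2_eq_of_two_pow_add_two_pow_eq (hc.ne huv.ne) (hc.ne hxy.ne) hsum
    rw [← Sym2.map_mk, ← Sym2.map_mk] at hcode
    exact Sym2.map.injective hc hcode
  weak u v huv := by
    have hcard w : (indepLabel S c w).card = (indepOffsets S w).card :=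
      Finset.card_singleton_add _ _
    have hpos w : 1 ≤ (indepOffsets S w).card := Finset.card_pos.2 ⟨0, zero_mem_indepOffsets w⟩
    rw [indepLabel_add_indepLabel, Finset.card_singleton_add, hcard, hcard]
    by_cases hu : u ∈ S
    · rw [indepOffsets_of_notMem fun hv => hS hu hv huv.ne huv, add_zero, Finset.card_zero]
      exact (max_eq_left (hpos u)).symm
    · rw [indepOffsets_of_notMem hu, zero_add, Finset.card_zero]
      exact (max_eq_right (hpos v)).symm

end Label

section Uncovered

variable {V : Type*} [Fintype V] (G : SimpleGraph V)

open scoped Classical in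
noncomputable def uncoveredEdges (S : Set V) : Finset (Sym2 V) :=
  G.edgeFinset.filter fun e => ∀ v ∈ e, v ∉ S

variable {G}

theorem mk_mem_uncoveredEdges {S : Set V} {u v : V} :
    s(u, v) ∈ uncoveredEdges G S ↔ G.Adj u v ∧ u ∉ S ∧ v ∉ S := by
  simp [uncoveredEdges]

theorem monoEdgeCount_eq_card_uncoveredEdges (f : V → Finset ℕ) :
    monoEdgeCount G f = (uncoveredEdges G {v | (f v).card ≠ 1}).card := by
  unfold monoEdgeCount uncoveredEdges
  congr with e
  simp only [Set.mem_ofPred_eq, not_not]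

theorem monoCounts_eq_image :
    monoCounts G = (fun S => (uncoveredEdges G S).card) '' {S | G.IsIndepSet S} := by
  ext k
  constructor
  · rintro ⟨f, hf, rfl⟩
    exact ⟨_, hf.isIndepSet_setOf_card_ne_one, (monoEdgeCount_eq_card_uncoveredEdges f).symm⟩
  · rintro ⟨S, hS, rfl⟩
    have hc : Function.Injective fun v => (Fintype.equivFin V v : ℕ) :=
      Fin.val_injective.comp (Fintype.equivFin V).injective
    refine ⟨_, isWeakIASI_indepLabel hS hc, ?_⟩
    simp only [monoEdgeCount_eq_card_uncoveredEdges, ne_eq, card_indepLabel_eq_one_iff, not_not,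
      Set.ofPred_mem_eq]

end Uncovered

namespace SimpleGraph

variable {k : ℕ}

theorem cycleGraph_adj_iff_val {a b : Fin (k + 2)} :
    (cycleGraph (k + 2)).Adj a b ↔ a.val + 1 = b.val ∨ b.val + 1 = a.val ∨
      (a.val = k + 1 ∧ b.val = 0) ∨ (b.val = k + 1 ∧ a.val = 0) := by
  have hsub (x y : Fin (k + 2)) :
      (x - y).val = 1 ↔ x.val = y.val + 1 ∨ (x.val = 0 ∧ y.val = k + 1) := by
    rcases le_or_gt y x with h | h
    · rw [Fin.sub_val_of_le h]; omega
    · rw [Fin.coe_sub_iff_lt.2 h]; omega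
  rw [cycleGraph_adj', hsub, hsub]
  omega

theorem cycleGraph_adj_add_one (a : Fin (k + 2)) : (cycleGraph (k + 2)).Adj a (a + 1) := by
  rw [cycleGraph_adj, add_sub_cancel_left]
  exact Or.inr rfl

variable {S T : Set (Fin (k + 2))}

theorem two_mul_ncard_le_of_isIndepSet (hS : (cycleGraph (k + 2)).IsIndepSet S) :
    2 * S.ncard ≤ k + 2 := by
  have hdisj : Disjoint S ((· + 1) '' S) := by
    rw [Set.disjoint_left]
    rintro _ ha ⟨b, hb, rfl⟩
    exact hS hb ha (cycleGraph_adj_add_one b).ne (cycleGraph_adj_add_one b)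
  calc 2 * S.ncard = (S ∪ (· + 1) '' S).ncard := by
        rw [Set.ncard_union_eq hdisj, Set.ncard_image_of_injective _ (add_left_injective 1)]
        ring
    _ ≤ k + 2 := by simpa using Set.ncard_le_card (S ∪ (· + 1) '' S)

theorem exists_notMem_and_add_one_notMem (hodd : Odd (k + 2))
    (hS : (cycleGraph (k + 2)).IsIndepSet S) : ∃ a, a ∉ S ∧ a + 1 ∉ S := by
  by_contra! h
  have hsub : (· + 1) '' Sᶜ ⊆ S := by
    rintro _ ⟨a, ha, rfl⟩
    exact h a ha
  have hle := Set.ncard_le_ncard hsub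
  rw [Set.ncard_image_of_injective _ (add_left_injective 1)] at hle
  have hsum := Set.ncard_add_ncard_compl S
  have := two_mul_ncard_le_of_isIndepSet hS
  rw [Nat.card_fin] at hsum
  obtain ⟨r, hr⟩ := hodd
  omega

theorem exists_notMem_notMem (hodd : Odd (k + 2)) (hS : (cycleGraph (k + 2)).IsIndepSet S)
    (hT : (cycleGraph (k + 2)).IsIndepSet T) (hST : Disjoint S T) : ∃ a, a ∉ S ∧ a ∉ T := by
  by_contra! h
  have huniv : S ∪ T = Set.univ := Set.eq_univ_of_forall fun a => by
    by_cases ha : a ∈ S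
    · exact Or.inl ha
    · exact Or.inr (h a ha)
  have hcard := Set.ncard_union_eq hST
  rw [huniv, Set.ncard_univ, Nat.card_fin] at hcard
  have := two_mul_ncard_le_of_isIndepSet hS
  have := two_mul_ncard_le_of_isIndepSet hT
  obtain ⟨r, hr⟩ := hodd
  omega

theorem IsIndepSet.boxProd_slice {α β : Type*} {G : SimpleGraph α} {H : SimpleGraph β}
    {S : Set (α × β)} (hS : (G □ H).IsIndepSet S) (b : β) : G.IsIndepSet {a | (a, b) ∈ S} :=
  fun _ ha _ ha' hne hadj => hS ha ha' (by simpa using hne) (boxProd_adj.2 (Or.inl ⟨hadj, rfl⟩))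

theorem IsIndepSet.disjoint_boxProd_slice {α β : Type*} {G : SimpleGraph α} {H : SimpleGraph β}
    {S : Set (α × β)} (hS : (G □ H).IsIndepSet S) {b b' : β} (hb : H.Adj b b') :
    Disjoint {a | (a, b) ∈ S} {a | (a, b') ∈ S} :=
  Set.disjoint_left.2 fun _ ha ha' =>
    hS ha ha' (by simpa using hb.ne) (boxProd_adj.2 (Or.inr ⟨hb, rfl⟩))

variable {n : ℕ}

theorem prism_adj_iff_val {u v : Fin (k + 2) × Fin (n + 1)} :
    (cycleGraph (k + 2) □ pathGraph (n + 1)).Adj u v ↔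
      (u.2.val = v.2.val ∧ (u.1.val + 1 = v.1.val ∨ v.1.val + 1 = u.1.val ∨
        (u.1.val = k + 1 ∧ v.1.val = 0) ∨ (v.1.val = k + 1 ∧ u.1.val = 0))) ∨
      (u.1.val = v.1.val ∧ (u.2.val + 1 = v.2.val ∨ v.2.val + 1 = u.2.val)) := by
  rw [boxProd_adj, cycleGraph_adj_iff_val, pathGraph_adj, Fin.ext_iff, Fin.ext_iff]
  tauto

theorem le_card_uncoveredEdges_prism (hodd : Odd (k + 2)) {S : Set (Fin (k + 2) × Fin (n + 1))}
    (hS : (cycleGraph (k + 2) □ pathGraph (n + 1)).IsIndepSet S) :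
    2 * n + 1 ≤ (uncoveredEdges (cycleGraph (k + 2) □ pathGraph (n + 1)) S).card := by
  have hlayer (j : Fin (n + 1)) : ∃ a, (a, j) ∉ S ∧ (a + 1, j) ∉ S :=
    exists_notMem_and_add_one_notMem hodd (hS.boxProd_slice j)
  have hrung (j : Fin n) : ∃ a, (a, j.castSucc) ∉ S ∧ (a, j.succ) ∉ S :=
    exists_notMem_notMem hodd (hS.boxProd_slice _) (hS.boxProd_slice _)
      (hS.disjoint_boxProd_slice (pathGraph_adj.2 (Or.inl (by simp))))
  choose a ha ha' using hlayer
  choose b hb hb' using hrung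
  let F : Fin (n + 1) ⊕ Fin n → Sym2 (Fin (k + 2) × Fin (n + 1)) :=
    Sum.elim (fun j => s((a j, j), (a j + 1, j))) (fun j => s((b j, j.castSucc), (b j, j.succ)))
  have hF x : F x ∈ uncoveredEdges (cycleGraph (k + 2) □ pathGraph (n + 1)) S := by
    rcases x with j | j <;>
      simp only [F, Sum.elim_inl, Sum.elim_inr, mk_mem_uncoveredEdges, boxProd_adj]
    · exact ⟨Or.inl ⟨cycleGraph_adj_add_one _, trivial⟩, ha j, ha' j⟩
    · exact ⟨Or.inr ⟨pathGraph_adj.2 (Or.inl (by simp)), trivial⟩, hb j, hb' j⟩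
  have hFinj : Function.Injective F := by
    intro x y h
    have hsnd := congrArg (Sym2.map Prod.snd) h
    rcases x with j | j <;> rcases y with j' | j' <;>
      simp only [F, Sum.elim_inl, Sum.elim_inr, Sym2.map_mk, Sym2.eq, Sym2.rel_iff',
        Prod.mk.injEq, Prod.swap_prod_mk, Fin.ext_iff, Fin.val_castSucc, Fin.val_succ,
        Sum.inl.injEq, Sum.inr.injEq, reduceCtorEq] at hsnd ⊢ <;>
      omega
  calc 2 * n + 1 = (Finset.univ : Finset (Fin (n + 1) ⊕ Fin n)).card := by
        simp only [card_univ, Fintype.card_sum, Fintype.card_fin]; ring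
    _ ≤ _ := Finset.card_le_card_of_injOn F (fun x _ => hF x) hFinj.injOn

def checkerboard (k n : ℕ) : Set (Fin (k + 2) × Fin (n + 1)) :=
  {v | (v.1.val + v.2.val) % 2 = 1}

theorem mem_checkerboard_iff_notMem_of_adj (heven : Even (k + 2))
    {u v : Fin (k + 2) × Fin (n + 1)} (huv : (cycleGraph (k + 2) □ pathGraph (n + 1)).Adj u v) :
    u ∈ checkerboard k n ↔ v ∉ checkerboard k n := by
  simp only [checkerboard, Set.mem_ofPred_eq]
  obtain ⟨r, hr⟩ := heven
  rw [prism_adj_iff_val] at huv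
  omega

theorem isIndepSet_checkerboard (heven : Even (k + 2)) :
    (cycleGraph (k + 2) □ pathGraph (n + 1)).IsIndepSet (checkerboard k n) :=
  fun _ hu _ hv _ huv => (mem_checkerboard_iff_notMem_of_adj heven huv).1 hu hv

theorem uncoveredEdges_checkerboard (heven : Even (k + 2)) :
    uncoveredEdges (cycleGraph (k + 2) □ pathGraph (n + 1)) (checkerboard k n) = ∅ := by
  refine Finset.eq_empty_of_forall_notMem fun e => ?_
  induction e using Sym2.ind with
  | _ u v =>
    rw [mk_mem_uncoveredEdges]
    rintro ⟨huv, hu, hv⟩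
    exact hv ((mem_checkerboard_iff_notMem_of_adj heven huv).not_left.1 hu)

theorem isIndepSet_checkerboard_diff_lastColumn (hodd : Odd (k + 2)) :
    (cycleGraph (k + 2) □ pathGraph (n + 1)).IsIndepSet
      (checkerboard k n \ {v | v.1 = Fin.last (k + 1)}) := by
  rintro u hu v hv - huv
  simp only [checkerboard, Set.mem_sdiff, Set.mem_ofPred_eq, Fin.ext_iff, Fin.val_last] at hu hv
  obtain ⟨r, hr⟩ := hodd
  rw [prism_adj_iff_val] at huv
  omega

theorem card_uncoveredEdges_checkerboard_diff_lastColumn_le (hodd : Odd (k + 2)) :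
    (uncoveredEdges (cycleGraph (k + 2) □ pathGraph (n + 1))
      (checkerboard k n \ {v | v.1 = Fin.last (k + 1)})).card ≤ 2 * n + 1 := by
  -- In each layer: the edge from the last column to its same-coloured neighbour; then the rungs
  -- of the last column.
  let W : Fin (n + 1) ⊕ Fin n → Sym2 (Fin (k + 2) × Fin (n + 1)) := Sum.elim
    (fun j => s((Fin.last (k + 1), j), (if j.val % 2 = 0 then 0 else (Fin.last k).castSucc, j)))
    (fun j => s((Fin.last (k + 1), j.castSucc), (Fin.last (k + 1), j.succ)))
  calc _ ≤ (Finset.univ.image W).card := Finset.card_le_card ?_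
    _ ≤ (Finset.univ : Finset (Fin (n + 1) ⊕ Fin n)).card := Finset.card_image_le
    _ = 2 * n + 1 := by simp only [card_univ, Fintype.card_sum, Fintype.card_fin]; ring
  intro e he
  induction e using Sym2.ind with
  | _ u v =>
    obtain ⟨huv, hu, hv⟩ := mk_mem_uncoveredEdges.1 he
    obtain ⟨⟨a, ha⟩, ⟨j, hj⟩⟩ := u
    obtain ⟨⟨b, hb⟩, ⟨j', hj'⟩⟩ := v
    simp only [checkerboard, Set.mem_sdiff, Set.mem_ofPred_eq, Fin.ext_iff, Fin.val_last] at hu hv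
    rw [prism_adj_iff_val] at huv
    obtain ⟨r, hr⟩ := hodd
    dsimp only at hu hv huv
    simp only [Finset.mem_image, Finset.mem_univ, true_and]
    rcases huv with ⟨h2, h1⟩ | ⟨h1, h2 | h2⟩
    · refine ⟨.inl ⟨j, hj⟩, ?_⟩
      simp only [W, Sum.elim_inl, Sym2.eq_iff, Prod.ext_iff, Fin.ext_iff, Fin.val_last]
      split_ifs <;> simp only [Fin.val_zero, Fin.val_castSucc, Fin.val_last, and_true] <;>
        omega
    all_goals
      refine ⟨.inr ⟨min j j', by omega⟩, ?_⟩
      simp only [W, Sum.elim_inr, Fin.castSucc_mk, Fin.succ_mk, Sym2.eq_iff, Prod.ext_iff,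
        Fin.ext_iff, Fin.val_last]
      omega

end SimpleGraph

theorem sparing_number_prism_general (m n : ℕ) (hm : 3 ≤ m) :
    (Even m → IsLeast (monoCounts (cycleGraph m □ pathGraph (n + 1))) 0) ∧
      (Odd m → IsLeast (monoCounts (cycleGraph m □ pathGraph (n + 1))) (2 * n + 1)) := by
  obtain ⟨k, rfl⟩ : ∃ k, m = k + 2 := ⟨m - 2, by omega⟩
  rw [monoCounts_eq_image]
  refine ⟨fun heven => ⟨?_, fun _ _ => Nat.zero_le _⟩, fun hodd => ⟨?_, ?_⟩⟩
  · exact ⟨_, isIndepSet_checkerboard heven,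
      Finset.card_eq_zero.2 (uncoveredEdges_checkerboard heven)⟩
  · exact ⟨_, isIndepSet_checkerboard_diff_lastColumn hodd, le_antisymm
      (card_uncoveredEdges_checkerboard_diff_lastColumn_le hodd)
      (le_card_uncoveredEdges_prism hodd (isIndepSet_checkerboard_diff_lastColumn hodd))⟩
  · rintro _ ⟨S, hS, rfl⟩
    exact le_card_uncoveredEdges_prism hodd hS

/-- For `m ≥ 3`, `n ≥ 1`, the sparing number of the prism `Cₘ □ Pₙ`
is `0` if `m` is even and `2n + 1` if `m` is odd. -/
theorem sparing_number_prism (m n : ℕ) (hm : 3 ≤ m) (hn : 1 ≤ n) :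
    (Even m → IsLeast (monoCounts (cycleGraph m □ pathGraph (n + 1))) 0) ∧
      (Odd m → IsLeast (monoCounts (cycleGraph m □ pathGraph (n + 1))) (2 * n + 1)) :=
  sparing_number_prism_general m n hm
end
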